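/- arXiv:math/0604011 — 4 statements merged into one kernel-verified Lean document; each statement's English description precedes it below -/
import Mathlib

section
/- Let U be a finite-dimensional complex vector space, X̄, Ȳ ∈ End(U), ī ∈ Hom(ℂ, U) (viewed as a vector ī ∈ U), and j̄ ∈ Hom(U, ℂ). Suppose [X̄, Ȳ] = ī∘j̄ and the vectors {Ȳ^m X̄^k ī : m, k ≥ 0} span U. Then j̄ = 0. -/
open LinearMap

section aux

variable {U : Type*} [AddCommGroup U] [Module ℂ U] [FiniteDimensional ℂ U]

lemma trace_smulRight' (j : U →ₗ[ℂ] ℂ) (i : U) :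
    trace ℂ U (j.smulRight i) = j i := by
  have h : j.smulRight i = dualTensorHom ℂ U U (j ⊗ₜ i) := by
    ext v; simp
  rw [h, trace_eq_contract_apply, contractLeft_apply]

lemma trace_mul_rankOne (A : Module.End ℂ U) (j : U →ₗ[ℂ] ℂ) (i : U) :
    trace ℂ U (A * j.smulRight i) = j (A i) := by
  have h : A * j.smulRight i = j.smulRight (A i) := by
    ext v; simp [Module.End.mul_apply]
  rw [h, trace_smulRight']

end aux

/-- Proposition 2 (key linear-algebra lemma): if `[X,Y] = j(-)•i` is a rank-one
commutator and the vectors `Y^m X^k i` span the finite-dimensional space `U`,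
then `j = 0`. -/
theorem stmt_0 {U : Type*} [AddCommGroup U] [Module ℂ U] [FiniteDimensional ℂ U]
    (X Y : Module.End ℂ U) (i : U) (j : U →ₗ[ℂ] ℂ)
    (hcomm : X * Y - Y * X = j.smulRight i)
    (hspan : Submodule.span ℂ {u : U | ∃ m k : ℕ, u = (Y ^ m * X ^ k) i} = ⊤) :
    j = 0 := by
  set t : ℕ → ℕ → ℕ → ℂ := fun p k q => j ((Y ^ p * X ^ k * Y ^ q) i) with ht
  -- t as a trace
  have htr : ∀ p k q, t p k q = trace ℂ U (Y ^ p * X ^ k * Y ^ q * (j.smulRight i)) := by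
    intro p k q
    rw [ht, trace_mul_rankOne]
  -- telescoping identity : for every m k, ∑_{q ≤ m} t (m-q) k q = 0
  have htel : ∀ m k : ℕ, ∑ q ∈ Finset.range (m + 1), t (m - q) k q = 0 := by
    intro m k
    have hterm : ∀ q, q ≤ m →
        t (m - q) k q
          = trace ℂ U (Y ^ (m + 1 - q) * X ^ k * Y ^ q * X)
            - trace ℂ U (Y ^ (m + 1 - (q + 1)) * X ^ k * Y ^ (q + 1) * X) := by
      intro q hq
      have h1 : m + 1 - q = (m - q) + 1 := by omega
      have h2 : m + 1 - (q + 1) = m - q := by omega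
      have e1 : Y ^ (m - q) * X ^ k * Y ^ q * (X * Y - Y * X)
          = (Y ^ (m - q) * X ^ k * Y ^ q * X) * Y
            - Y ^ (m - q) * X ^ k * Y ^ (q + 1) * X := by
        simp only [mul_sub, pow_succ, mul_assoc]
      have e2 : Y * (Y ^ (m - q) * X ^ k * Y ^ q * X)
          = Y ^ ((m - q) + 1) * X ^ k * Y ^ q * X := by
        simp only [pow_succ', mul_assoc]
      rw [htr, ← hcomm, h1, h2, e1, map_sub, trace_mul_comm, e2]
    rw [Finset.sum_congr rfl (fun q hq => hterm q (Finset.mem_range_succ_iff.mp hq))]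
    rw [Finset.sum_range_sub'
      (fun q => trace ℂ U (Y ^ (m + 1 - q) * X ^ k * Y ^ q * X))]
    have e0 : m + 1 - 0 = m + 1 := rfl
    have e2 : m + 1 - (m + 1) = 0 := by omega
    rw [e0, e2, sub_eq_zero]
    have l1 : Y ^ (m + 1) * X ^ k * Y ^ 0 * X = Y ^ (m + 1) * X ^ (k + 1) := by
      simp [pow_succ, mul_assoc]
    have l2 : Y ^ 0 * X ^ k * Y ^ (m + 1) * X = X ^ k * (Y ^ (m + 1) * X) := by
      simp [mul_assoc]
    rw [l1, l2, trace_mul_comm ℂ (X ^ k) (Y ^ (m + 1) * X)]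
    congr 1
    simp only [pow_succ', mul_assoc]
  -- commutation identity
  have hXY : X * Y = Y * X + j.smulRight i := by rw [← hcomm]; abel
  have hcommk : ∀ k : ℕ, X ^ k * Y
      = Y * X ^ k + ∑ a ∈ Finset.range k, X ^ a * (j.smulRight i) * X ^ (k - 1 - a) := by
    intro k
    induction k with
    | zero => simp
    | succ k ih =>
      have h0 : X ^ (k + 1) * Y = X * (X ^ k * Y) := by rw [pow_succ', mul_assoc]
      rw [h0, ih, mul_add, ← mul_assoc, hXY, Finset.mul_sum]
      rw [Finset.sum_range_succ' (fun a => X ^ a * (j.smulRight i) * X ^ (k + 1 - 1 - a))]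
      have e1 : ∀ a ∈ Finset.range k,
          X * (X ^ a * (j.smulRight i) * X ^ (k - 1 - a))
            = X ^ (a + 1) * (j.smulRight i) * X ^ (k + 1 - 1 - (a + 1)) := by
        intro a ha
        have h : k + 1 - 1 - (a + 1) = k - 1 - a := by omega
        rw [h]
        simp only [pow_succ', mul_assoc]
      rw [Finset.sum_congr rfl e1]
      have e2 : X ^ 0 * (j.smulRight i) * X ^ (k + 1 - 1 - 0) = (j.smulRight i) * X ^ k := by
        simp
      rw [e2, add_mul]
      have e3 : Y * X * X ^ k = Y * X ^ (k + 1) := by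
        rw [mul_assoc, ← pow_succ']
      rw [e3]
      abel
  -- main claim by strong induction on p + k + q
  have main : ∀ n p k q : ℕ, p + k + q = n → t p k q = 0 := by
    intro n
    induction n using Nat.strong_induction_on with
    | _ n IH =>
      -- flattening: if p + k + q = n then t p k q = t (p+q) k 0
      have hflat : ∀ q p k, p + k + q = n → t p k q = t (p + q) k 0 := by
        intro q
        induction q with
        | zero => intro p k _; simp
        | succ q ihq =>
          intro p k hn
          have expand : Y ^ p * X ^ k * Y ^ (q + 1)
              = Y ^ (p + 1) * X ^ k * Y ^ q
                + ∑ a ∈ Finset.range k,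
                    Y ^ p * X ^ a * ((j.smulRight i) * (X ^ (k - 1 - a) * Y ^ q)) := by
            have h1 : Y ^ p * X ^ k * Y ^ (q + 1) = Y ^ p * (X ^ k * Y) * Y ^ q := by
              simp only [pow_succ, mul_assoc, pow_mul_comm']
            rw [h1, hcommk k, mul_add, add_mul, Finset.mul_sum, Finset.sum_mul]
            simp only [pow_succ, mul_assoc]
          have step : t p k (q + 1) = t (p + 1) k q := by
            rw [ht]
            simp only
            rw [expand]
            rw [LinearMap.add_apply, map_add, LinearMap.sum_apply, map_sum]
            have hz : ∀ a ∈ Finset.range k,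
                j ((Y ^ p * X ^ a * ((j.smulRight i) * (X ^ (k - 1 - a) * Y ^ q))) i) = 0 := by
              intro a ha
              have happ : (Y ^ p * X ^ a * ((j.smulRight i) * (X ^ (k - 1 - a) * Y ^ q))) i
                  = j ((X ^ (k - 1 - a) * Y ^ q) i) • ((Y ^ p * X ^ a) i) := by
                simp [Module.End.mul_apply]
              rw [happ, map_smul]
              have h1 : t p a 0 = 0 := IH (p + a + 0) (by
                have := Finset.mem_range.mp ha; omega) p a 0 rfl
              have h2 : j ((Y ^ p * X ^ a) i) = 0 := by
                rw [ht] at h1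
                simpa using h1
              rw [h2]
              simp
            rw [Finset.sum_eq_zero hz, add_zero]
          rw [step, ihq (p + 1) k (by omega)]
          congr 1
          omega
      intro p k q hn
      set m := p + q with hm
      have hconst : ∀ q' ∈ Finset.range (m + 1), t (m - q') k q' = t m k 0 := by
        intro q' hq'
        have hq'm : q' ≤ m := Finset.mem_range_succ_iff.mp hq'
        have hlen : (m - q') + k + q' = n := by omega
        rw [hflat q' (m - q') k hlen]
        congr 1
        omega
      have hsum := htel m k
      rw [Finset.sum_congr rfl hconst, Finset.sum_const, Finset.card_range] at hsum
      have hm0 : t m k 0 = 0 := by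
        rw [nsmul_eq_mul] at hsum
        have hne : ((m : ℂ) + 1) ≠ 0 := Nat.cast_add_one_ne_zero m
        push_cast at hsum
        exact (mul_eq_zero.mp hsum).resolve_left hne
      rw [hflat q p k hn, hm0]
  -- conclude : j vanishes on the spanning set
  have hker : Submodule.span ℂ {u : U | ∃ m k : ℕ, u = (Y ^ m * X ^ k) i} ≤ ker j := by
    rw [Submodule.span_le]
    rintro u ⟨m, k, rfl⟩
    have h1 := main (m + k + 0) m k 0 rfl
    rw [ht] at h1
    simpa using h1
  rw [hspan] at hker
  ext u
  simpa using hker (Submodule.mem_top : u ∈ ⊤)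
end

section
/- For m = 2 and nonnegative integers k_0, k_1, the variety D^n_{(k_0,k_1)} of tuples (X̄_0, X̄_1, Ȳ_0, Ȳ_1, ī_n, j̄_n) with X̄_i ∈ Hom(V_{i+1}, V_i), Ȳ_i ∈ Hom(V_i, V_{i+1}) (indices mod 2), ī_n ∈ V_n, j̄_n ∈ V_n^*, dim V_i = k_i, satisfying X̄_i Ȳ_i − Ȳ_{i-1} X̄_{i-1} + Id = 0 for i ≠ n and X̄_n Ȳ_n − Ȳ_{n-1} X̄_{n-1} + Id = ī_n j̄_n, is nonempty only if k_n − (k_0 − k_1)² ≥ 0. -/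
/-!
Reflection functors (Crawley-Boevey). The relations are those of a deformed preprojective algebra
of the two-vertex cycle, framed at vertex `n` by a one-dimensional space, with parameters
`(λ₀, λ₁) = (1, 1)`. If `λ₀ ≠ 0`, replacing `V₀` by the kernel of `[X₀, -Y₁, -F] : V₁ ⊕ V₁ ⊕ U → V₀`
gives a solution with parameters `(-λ₀, λ₁ + 2λ₀)` and `dim V₀' = 2 dim V₁ + dim U - dim V₀`;
the same works at vertex `1`. Odd parameters stay odd, hence nonzero. Reflecting at the vertex of
larger dimension lowers the total dimension, and the inequality `(k₀ - k₁)² ≤ k_n` for the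
reflected dimensions implies it for the original ones, so induction ends at `k₀ = k₁`.
-/

open Matrix Module LinearMap

universe u

section KerProj

variable {K W V : Type*} [Ring K] [AddCommGroup W] [Module K W] [AddCommGroup V] [Module K V]
  {α : W →ₗ[K] V} {β : V →ₗ[K] W}

def LinearMap.kerProj (hαβ : α ∘ₗ β = LinearMap.id) : W →ₗ[K] ker α :=
  codRestrict (ker α) (LinearMap.id - β ∘ₗ α) fun w => by
    simp [← comp_apply (f := α), hαβ]

variable (hαβ : α ∘ₗ β = LinearMap.id)
include hαβ

theorem LinearMap.coe_kerProj_apply (w : W) : (kerProj hαβ w : W) = w - β (α w) := rfl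

theorem LinearMap.kerProj_coe (w : ker α) : kerProj hαβ w = w := by
  ext
  simp [coe_kerProj_apply]

end KerProj

theorem LinearMap.finrank_ker_add_finrank_of_comp_eq_id {K W V : Type*} [DivisionRing K]
    [AddCommGroup W] [Module K W] [AddCommGroup V] [Module K V] [FiniteDimensional K W]
    {α : W →ₗ[K] V} {β : V →ₗ[K] W} (hαβ : α ∘ₗ β = LinearMap.id) :
    finrank K (ker α) + finrank K V = finrank K W := by
  have hsurj : Function.Surjective α := fun v => ⟨β v, by rw [← comp_apply, hαβ, id_apply]⟩
  rw [← finrank_range_add_finrank_ker α, range_eq_top.mpr hsurj, finrank_top, add_comm]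

theorem Odd.intCast_ne_zero {K : Type*} [AddGroupWithOne K] [CharZero K] {l : ℤ} (hl : Odd l) :
    (l : K) ≠ 0 :=
  Int.cast_ne_zero.mpr <| by rintro rfl; simp at hl

section Reflection

variable {K U V0 V1 : Type*} [Field K] [AddCommGroup U] [Module K U] [AddCommGroup V0]
  [Module K V0] [AddCommGroup V1] [Module K V1]

theorem exists_reflection [FiniteDimensional K U] [FiniteDimensional K V1]
    {l0 l1 : K} (hl0 : l0 ≠ 0)
    {X0 : V1 →ₗ[K] V0} {X1 : V0 →ₗ[K] V1} {Y0 : V0 →ₗ[K] V1} {Y1 : V1 →ₗ[K] V0}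
    {F : U →ₗ[K] V0} {G : V0 →ₗ[K] U} {M : Module.End K V1}
    (h0 : X0 ∘ₗ Y0 - Y1 ∘ₗ X1 + l0 • LinearMap.id = F ∘ₗ G)
    (h1 : X1 ∘ₗ Y1 - Y0 ∘ₗ X0 + l1 • LinearMap.id = M) :
    ∃ V0' : Submodule K (V1 × V1 × U),
      finrank K V0' + finrank K V0 = 2 * finrank K V1 + finrank K U ∧
      ∃ (X0' : V1 →ₗ[K] V0') (X1' : V0' →ₗ[K] V1) (Y0' : V0' →ₗ[K] V1) (Y1' : V1 →ₗ[K] V0')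
        (F' : U →ₗ[K] V0') (G' : V0' →ₗ[K] U),
        X0' ∘ₗ Y0' - Y1' ∘ₗ X1' + (-l0) • LinearMap.id = F' ∘ₗ G' ∧
        X1' ∘ₗ Y1' - Y0' ∘ₗ X0' + (l1 + 2 * l0) • LinearMap.id = M := by
  set α : V1 × V1 × U →ₗ[K] V0 := X0.coprod ((-Y1).coprod (-F))
  set β : V0 →ₗ[K] V1 × V1 × U := (-l0)⁻¹ • Y0.prod (X1.prod G)
  have hαβ : α ∘ₗ β = LinearMap.id := by
    have hl : l0⁻¹ * l0 = 1 := inv_mul_cancel₀ hl0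
    refine LinearMap.ext fun v => ?_
    have h0v := LinearMap.congr_fun h0 v
    simp only [LinearMap.add_apply, LinearMap.sub_apply, coe_comp, Function.comp_apply,
      LinearMap.smul_apply, id_coe, id_eq, inv_neg, comp_smul, coprod_comp_prod, neg_comp, smul_add,
      neg_smul, smul_neg, neg_neg, LinearMap.neg_apply, α, β] at h0v ⊢
    linear_combination (norm := module) (-l0⁻¹) • h0v + hl • v
  set π := kerProj hαβ
  refine ⟨ker α, ?_, l0 • π ∘ₗ inl K _ _, fst K _ _ ∘ₗ snd K _ _ ∘ₗ (ker α).subtype,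
    fst K _ _ ∘ₗ (ker α).subtype, (-l0) • π ∘ₗ inr K _ _ ∘ₗ inl K _ _,
    (-l0) • π ∘ₗ inr K _ _ ∘ₗ inr K _ _, snd K _ _ ∘ₗ snd K _ _ ∘ₗ (ker α).subtype, ?_, ?_⟩
  · rw [finrank_ker_add_finrank_of_comp_eq_id hαβ]
    simp [two_mul, add_assoc]
  · refine LinearMap.ext fun w => ?_
    have hw : π ((w : V1 × V1 × U).1, 0) + π (0, (w : V1 × V1 × U).2.1, 0)
        + π (0, 0, (w : V1 × V1 × U).2.2) = w := by
      rw [← map_add, ← map_add]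
      convert kerProj_coe hαβ w using 2
      simp
    simp only [LinearMap.add_apply, LinearMap.sub_apply, coe_comp, coe_smul, coe_inl, coe_fst,
      Submodule.coe_subtype, Function.comp_apply, Pi.smul_apply, coe_inr, coe_snd, neg_smul,
      sub_neg_eq_add, LinearMap.smul_apply, id_coe, id_eq]
    linear_combination (norm := module) l0 • hw
  · have hl : l0 * l0⁻¹ = 1 := mul_inv_cancel₀ hl0
    rw [← h1]
    refine LinearMap.ext fun b => ?_
    simp only [inv_neg, LinearMap.add_apply, LinearMap.sub_apply, coe_comp, coe_fst, coe_snd,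
      Submodule.coe_subtype, coe_smul, coe_inr, coe_inl, Function.comp_apply, Pi.smul_apply, neg_smul,
      NegMemClass.coe_neg, SetLike.val_smul, coe_kerProj_apply, coprod_apply, map_zero,
      LinearMap.neg_apply, add_zero, zero_add, LinearMap.smul_apply, LinearMap.prod_apply,
      Function.prod_apply, map_neg, Prod.smul_mk, smul_neg, Prod.neg_mk, neg_neg, Prod.mk_sub_mk,
      zero_sub, sub_neg_eq_add, smul_add, id_coe, id_eq, α, π, β]
    linear_combination (norm := module) hl • X1 (Y1 b) - hl • Y0 (X0 b)

end Reflection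

theorem sq_finrank_sub_finrank_le_finrank {K : Type*} [Field K] [CharZero K]
    {U : Type u} [AddCommGroup U] [Module K U] (hU : finrank K U = 1) {V0 V1 : Type u}
    [AddCommGroup V0] [Module K V0] [FiniteDimensional K V0]
    [AddCommGroup V1] [Module K V1] [FiniteDimensional K V1]
    {l0 l1 : ℤ} (hl0 : Odd l0) (hl1 : Odd l1)
    {X0 : V1 →ₗ[K] V0} {X1 : V0 →ₗ[K] V1} {Y0 : V0 →ₗ[K] V1} {Y1 : V1 →ₗ[K] V0}
    {F : U →ₗ[K] V0} {G : V0 →ₗ[K] U}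
    (h0 : X0 ∘ₗ Y0 - Y1 ∘ₗ X1 + (l0 : K) • LinearMap.id = F ∘ₗ G)
    (h1 : X1 ∘ₗ Y1 - Y0 ∘ₗ X0 + (l1 : K) • LinearMap.id = 0) :
    ((finrank K V0 : ℤ) - finrank K V1) ^ 2 ≤ finrank K V0 := by
  have : FiniteDimensional K U := Module.finite_of_finrank_eq_succ hU
  induction hn : finrank K V0 + finrank K V1 using Nat.strong_induction_on
    generalizing V0 V1 l0 l1 with
  | _ n ih =>
  rcases lt_trichotomy (finrank K V0) (finrank K V1) with hlt | heq | hgt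
  · -- reflect at the unframed vertex `1`, framing it by the zero space
    have h1' : X1 ∘ₗ Y1 - Y0 ∘ₗ X0 + (l1 : K) • LinearMap.id =
        (0 : PUnit.{u + 1} →ₗ[K] V1) ∘ₗ (0 : V1 →ₗ[K] PUnit.{u + 1}) := by
      rw [h1, zero_comp]
    obtain ⟨V1', hdim, X1', X0', Y1', Y0', F', G', h1'', h0'⟩ :=
      exists_reflection hl1.intCast_ne_zero h1' h0
    rw [Subsingleton.elim F' 0, zero_comp] at h1''
    rw [finrank_zero_of_subsingleton (M := PUnit.{u + 1}), add_zero] at hdim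
    have hrec := ih _ (by omega) (V0 := V0) (V1 := V1') (hl0.add_even (even_two_mul l1)) hl1.neg
      (by exact_mod_cast h0') (by exact_mod_cast h1'') rfl
    have hdimℤ : (finrank K V1' : ℤ) + finrank K V1 = 2 * finrank K V0 := by exact_mod_cast hdim
    nlinarith
  · simp [heq]
  · obtain ⟨V0', hdim, X0', X1', Y0', Y1', F', G', h0', h1'⟩ :=
      exists_reflection hl0.intCast_ne_zero h0 h1
    rw [hU] at hdim
    have hrec := ih _ (by omega) (V0 := V0') (V1 := V1) hl0.neg (hl1.add_even (even_two_mul l0))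
      (by exact_mod_cast h0') (by exact_mod_cast h1') rfl
    have hdimℤ : (finrank K V0' : ℤ) + finrank K V0 = 2 * finrank K V1 + 1 := by exact_mod_cast hdim
    nlinarith

theorem Matrix.sq_card_sub_card_le_card {K m n : Type u} [Field K] [CharZero K]
    [Fintype m] [DecidableEq m] [Fintype n] [DecidableEq n]
    {X0 : Matrix m n K} {X1 : Matrix n m K} {Y0 : Matrix n m K} {Y1 : Matrix m n K} {i j : m → K}
    (h0 : X0 * Y0 - Y1 * X1 + 1 = vecMulVec i j) (h1 : X1 * Y1 - Y0 * X0 + 1 = 0) :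
    ((Fintype.card m : ℤ) - Fintype.card n) ^ 2 ≤ Fintype.card m := by
  rw [vecMulVec_eq (Fin 1)] at h0
  have h0' := congrArg toLin' h0
  have h1' := congrArg toLin' h1
  simp only [map_add, map_sub, toLin'_mul, toLin'_one, map_zero] at h0' h1'
  simpa only [finrank_fintype_fun_eq_card] using
    sq_finrank_sub_finrank_le_finrank (V0 := m → K) (V1 := n → K) (finrank_fin_fun K)
      odd_one odd_one (by simpa using h0') (by simpa using h1')

/-- For `m = 2`, the variety `D^n_{(k₀,k₁)}` is nonempty only if
`k_n - (k₀ - k₁)² ≥ 0`. -/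
theorem stmt_5 (k0 k1 : ℕ) (n : Fin 2)
    (X0 : Matrix (Fin k0) (Fin k1) ℂ) (X1 : Matrix (Fin k1) (Fin k0) ℂ)
    (Y0 : Matrix (Fin k1) (Fin k0) ℂ) (Y1 : Matrix (Fin k0) (Fin k1) ℂ)
    (h : if n = 0 then
        ∃ i j : Fin k0 → ℂ,
          X0 * Y0 - Y1 * X1 + 1 = Matrix.vecMulVec i j ∧
          X1 * Y1 - Y0 * X0 + 1 = 0
      else
        ∃ i j : Fin k1 → ℂ,
          X1 * Y1 - Y0 * X0 + 1 = Matrix.vecMulVec i j ∧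
          X0 * Y0 - Y1 * X1 + 1 = 0) :
    ((k0 : ℤ) - (k1 : ℤ)) ^ 2 ≤ (if n = 0 then (k0 : ℤ) else (k1 : ℤ)) := by
  split_ifs at h ⊢
  · obtain ⟨i, j, h0, h1⟩ := h
    simpa using sq_card_sub_card_le_card h0 h1
  · obtain ⟨i, j, h1, h0⟩ := h
    simpa [sub_sq_comm] using sq_card_sub_card_le_card h1 h0
end

section
/- In K_0 of the category of finite-dimensional representations of a finite cyclic group Γ = ℤ/mℤ (m ≥ 2) embedded in SL_2(ℂ), with L = ε ⊕ ε^{-1} the natural 2-dimensional representation and W_0 the trivial representation: for any class P ∈ K_0(Γ) with dim(P) = 1, there exist a one-dimensional representation W and a representation V not containing the regular representation ℂΓ as a direct summand, such that P = [W] + [V]·([L] − 2[W_0]), and the pair ([V], [W]) is uniquely determined by P. -/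
open Finset

section Stmt11Aux

variable (m : ℕ) [NeZero m]

private lemma sum_range_zmod {M : Type*} [AddCommMonoid M] (h : ZMod m → M) :
    ∑ j ∈ Finset.range m, h (j : ZMod m) = ∑ i : ZMod m, h i := by
  rw [← Fin.sum_univ_eq_sum_range (fun j => h (j : ZMod m)) m]
  apply Fintype.sum_bijective (fun j : Fin m => ((j : ℕ) : ZMod m))
  · constructor
    · intro a b hab
      have := congrArg ZMod.val hab
      rwa [ZMod.val_cast_of_lt a.isLt, ZMod.val_cast_of_lt b.isLt, Fin.val_inj] at this
    · intro i
      exact ⟨⟨i.val, i.val_lt⟩, ZMod.natCast_zmod_val i⟩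
  · intro j; rfl

private lemma const_of_step (k : ZMod m → ℤ) (h : ∀ i, k (i + 1) = k i) :
    ∀ i, k i = k 0 := by
  have key : ∀ j : ℕ, k (j : ZMod m) = k 0 := by
    intro j
    induction j with
    | zero => simp
    | succ p ih => rw [Nat.cast_succ, h]; exact ih
  intro i
  have := key i.val
  rwa [ZMod.natCast_zmod_val] at this

private lemma shift_sum_eq (g : ZMod m → ℤ) :
    ∑ i : ZMod m, g (i + 1) = ∑ i : ZMod m, g i :=
  Fintype.sum_equiv (Equiv.addRight (1 : ZMod m)) _ _ (fun _ => rfl)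

private lemma ker_const (k : ZMod m → ℤ)
    (h : ∀ i, k (i - 1) + k (i + 1) - 2 * k i = 0) : ∀ i, k i = k 0 := by
  set d : ZMod m → ℤ := fun i => k (i + 1) - k i with hd_def
  have hd : ∀ i, d (i + 1) = d i := by
    intro i
    have h1 := h (i + 1)
    have h2 : i + 1 - 1 = i := by ring
    rw [h2] at h1
    simp only [hd_def]
    linarith
  have hdc : ∀ i, d i = d 0 := const_of_step m d hd
  have hsum : ∑ i : ZMod m, d i = 0 := by
    simp only [hd_def]
    rw [Finset.sum_sub_distrib, shift_sum_eq m k, sub_self]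
  have hcard : (Finset.univ : Finset (ZMod m)).card = m := by
    rw [Finset.card_univ, ZMod.card]
  have hm0 : (m : ℤ) ≠ 0 := by
    exact_mod_cast (NeZero.ne m)
  have hd0 : d 0 = 0 := by
    have : (m : ℤ) * d 0 = 0 := by
      rw [← hsum, Finset.sum_congr rfl (fun i _ => hdc i), Finset.sum_const, hcard,
        nsmul_eq_mul]
    exact (mul_eq_zero.mp this).resolve_left hm0
  have hstep : ∀ i, k (i + 1) = k i := by
    intro i
    have := hdc i
    rw [hd0] at this
    simp only [hd_def] at this
    linarith
  exact const_of_step m k hstep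

private lemma weighted_sum_zero (k : ZMod m → ℤ) :
    ∑ i : ZMod m, ((k (i - 1) + k (i + 1) - 2 * k i : ℤ) : ZMod m) * i = 0 := by
  have e1 : ∑ i : ZMod m, (k (i - 1) : ZMod m) * i
      = ∑ i : ZMod m, (k i : ZMod m) * (i + 1) := by
    apply Fintype.sum_equiv (Equiv.subRight (1 : ZMod m))
    intro i
    simp [Equiv.subRight, sub_add_cancel]
  have e2 : ∑ i : ZMod m, (k (i + 1) : ZMod m) * i
      = ∑ i : ZMod m, (k i : ZMod m) * (i - 1) := by
    apply Fintype.sum_equiv (Equiv.addRight (1 : ZMod m))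
    intro i
    simp [Equiv.addRight, add_sub_cancel_right]
  have expand : ∀ i : ZMod m, ((k (i - 1) + k (i + 1) - 2 * k i : ℤ) : ZMod m) * i
      = (k (i - 1) : ZMod m) * i + (k (i + 1) : ZMod m) * i - (k i : ZMod m) * (2 * i) := by
    intro i; push_cast; ring
  rw [Finset.sum_congr rfl (fun i _ => expand i), Finset.sum_sub_distrib,
    Finset.sum_add_distrib, e1, e2, ← Finset.sum_add_distrib, ← Finset.sum_sub_distrib]
  apply Finset.sum_eq_zero
  intro i _
  ring

end Stmt11Aux

/-- Lemma 2 (BGK Prop. 1.3.11), for Γ = ℤ/m (m ≥ 2): identify `K₀(Γ)` with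
`ZMod m → ℤ` via multiplicities. For any class `P` of dimension 1 there is a
unique pair `(n, V)` of a character `W_n` and a representation
`V : ZMod m → ℕ` not containing the regular representation (some multiplicity
is 0) such that `P = [W_n] + [V]·([L] - 2[W₀])`, where multiplication by
`[L] - 2[W₀]` sends multiplicities `k_i` to `k_{i-1} + k_{i+1} - 2k_i`. -/
theorem stmt_11 (m : ℕ) [NeZero m] (hm : 2 ≤ m)
    (P : ZMod m → ℤ) (hdim : ∑ i : ZMod m, P i = 1) :
    ∃! nV : ZMod m × (ZMod m → ℕ),
      (∃ i : ZMod m, nV.2 i = 0) ∧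
      ∀ i : ZMod m, P i =
        (if i = nV.1 then 1 else 0) +
        ((nV.2 (i - 1) : ℤ) + (nV.2 (i + 1) : ℤ) - 2 * (nV.2 i : ℤ)) := by
  classical
  set n : ZMod m := ∑ i : ZMod m, (P i : ZMod m) * i with hn_def
  set f : ZMod m → ℤ := fun i => P i - if i = n then 1 else 0 with hf_def
  have hdelta : ∑ i : ZMod m, (if i = n then (1 : ℤ) else 0) = 1 := by
    simp [Finset.sum_ite_eq']
  have hsumf : ∑ i : ZMod m, f i = 0 := by
    simp only [hf_def]
    rw [Finset.sum_sub_distrib, hdim, hdelta, sub_self]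
  have hwf : ∑ i : ZMod m, (f i : ZMod m) * i = 0 := by
    have expand : ∀ i : ZMod m, (f i : ZMod m) * i
        = (P i : ZMod m) * i - (if i = n then i else 0) := by
      intro i
      simp only [hf_def]
      push_cast [apply_ite (fun x : ℤ => (x : ZMod m))]
      split <;> ring
    rw [Finset.sum_congr rfl (fun i _ => expand i), Finset.sum_sub_distrib, ← hn_def,
      Finset.sum_ite_eq']
    simp
  -- set up the integer sequences
  set a : ℕ → ℤ := fun j => f ((j : ℕ) : ZMod m) with ha_def
  set S : ℕ → ℤ := fun i => ∑ j ∈ Finset.range i, a j with hS_def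
  have hSm : S m = 0 := by
    simp only [hS_def, ha_def]
    rw [sum_range_zmod m f, hsumf]
  set C : ℤ := ∑ j ∈ Finset.range m, (j : ℤ) * a j with hC_def
  have hdvd : (m : ℤ) ∣ C := by
    rw [← ZMod.intCast_zmod_eq_zero_iff_dvd]
    have : ((C : ℤ) : ZMod m)
        = ∑ j ∈ Finset.range m, ((j : ℕ) : ZMod m) * ((f ((j : ℕ) : ZMod m) : ℤ) : ZMod m) := by
      simp only [hC_def, ha_def]
      push_cast
      rfl
    rw [this, sum_range_zmod m (fun i : ZMod m => (i : ZMod m) * ((f i : ℤ) : ZMod m))]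
    rw [← hwf]
    exact Finset.sum_congr rfl (fun i _ => mul_comm _ _)
  set c : ℤ := C / m with hc_def
  have hc : (m : ℤ) * c = C := Int.mul_ediv_cancel' hdvd
  -- the sequence of partial sums of the "first differences"
  set k0 : ℕ → ℤ := fun i => ∑ t ∈ Finset.range i, (c + S (t + 1)) with hk0_def
  have hk0step : ∀ i, k0 (i + 1) = k0 i + (c + S (i + 1)) := by
    intro i; simp only [hk0_def]; rw [Finset.sum_range_succ]
  have hSstep : ∀ i, S (i + 1) = S i + a i := by
    intro i; simp only [hS_def]; rw [Finset.sum_range_succ]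
  -- Abel-type identity
  have G : ∀ N, ∑ t ∈ Finset.range N, S (t + 1)
      = (N : ℤ) * S N - ∑ j ∈ Finset.range N, (j : ℤ) * a j := by
    intro N
    induction N with
    | zero => simp [hS_def]
    | succ N ih =>
      rw [Finset.sum_range_succ, ih, Finset.sum_range_succ, hSstep N]
      push_cast
      ring
  have hk0m : k0 m = 0 := by
    simp only [hk0_def]
    rw [Finset.sum_add_distrib, Finset.sum_const, Finset.card_range, G m, hSm, ← hC_def,
      nsmul_eq_mul, hc]
    ring
  -- periodicity of a and S
  have haper : ∀ j, a (j + m) = a j := by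
    intro j
    simp only [ha_def]
    congr 1
    push_cast
    simp
  have hSper : ∀ i, S (i + m) = S i := by
    intro i
    have : S (i + m) = S i + ∑ t ∈ Finset.range m, a (i + t) := by
      simp only [hS_def]
      rw [Finset.sum_range_add]
    rw [this]
    have hz : ∑ t ∈ Finset.range m, a (i + t) = 0 := by
      have : ∀ t : ℕ, a (i + t) = (fun x : ZMod m => f ((i : ZMod m) + x)) ((t : ℕ) : ZMod m) := by
        intro t
        simp only [ha_def]
        congr 1
        push_cast
        ring
      rw [Finset.sum_congr rfl (fun t _ => this t),
        sum_range_zmod m (fun x : ZMod m => f ((i : ZMod m) + x))]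
      rw [← hsumf]
      exact Fintype.sum_equiv (Equiv.addLeft ((i : ℕ) : ZMod m)) _ _ (fun x => rfl)
    rw [hz, add_zero]
  -- window sums are constant
  have W1 : ∀ i, ∑ t ∈ Finset.range m, (c + S (i + 1 + t + 1))
      = ∑ t ∈ Finset.range m, (c + S (i + t + 1)) := by
    intro i
    obtain ⟨m', hm'⟩ : ∃ m', m = m' + 1 := ⟨m - 1, by omega⟩
    rw [hm', Finset.sum_range_succ, Finset.sum_range_succ']
    congr 1
    · apply Finset.sum_congr rfl
      intro t _
      congr 2
      omega
    · have h1 : i + 1 + m' + 1 = (i + 1) + (m' + 1) := by omega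
      have h2 : i + 0 + 1 = i + 1 := by omega
      rw [h1, h2, ← hm', hSper (i + 1)]
  have W : ∀ i, ∑ t ∈ Finset.range m, (c + S (i + t + 1))
      = ∑ t ∈ Finset.range m, (c + S (t + 1)) := by
    intro i
    induction i with
    | zero => simp
    | succ i ih => rw [← ih, W1 i]
  -- periodicity of k0
  have kper : ∀ i, k0 (i + m) = k0 i := by
    intro i
    simp only [hk0_def]
    rw [Finset.sum_range_add]
    have : ∑ t ∈ Finset.range m, (c + S (i + t + 1)) = ∑ t ∈ Finset.range m, (c + S (t + 1)) :=
      W i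
    rw [this]
    have : (∑ t ∈ Finset.range m, (c + S (t + 1))) = k0 m := by simp [hk0_def]
    rw [this, hk0m, add_zero]
  have kper' : ∀ x, k0 x = k0 (x % m) := by
    intro x
    have key : ∀ q r, k0 (r + m * q) = k0 r := by
      intro q
      induction q with
      | zero => simp
      | succ q ih =>
        intro r
        have : r + m * (q + 1) = (r + m * q) + m := by ring
        rw [this, kper, ih r]
    conv_lhs => rw [← Nat.mod_add_div x m]
    exact key (x / m) (x % m)
  have keq : ∀ x y : ℕ, x % m = y % m → k0 x = k0 y := by
    intro x y h
    rw [kper' x, kper' y, h]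
  -- second difference identity
  have D : ∀ j : ℕ, k0 (j + 2) + k0 j - 2 * k0 (j + 1) = a (j + 1) := by
    intro j
    have h2 : k0 (j + 2) = k0 (j + 1) + (c + S (j + 2)) := hk0step (j + 1)
    have h1 : k0 (j + 1) = k0 j + (c + S (j + 1)) := hk0step j
    have h3 : S (j + 2) = S (j + 1) + a (j + 1) := hSstep (j + 1)
    rw [h2, h1, h3]
    ring
  -- the integer-valued solution on ZMod m
  set k1 : ZMod m → ℤ := fun i => k0 i.val with hk1_def
  have hvlt : ∀ i : ZMod m, i.val < m := fun i => ZMod.val_lt i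
  have hk1p : ∀ i : ZMod m, k1 (i + 1) = k0 (i.val + 1) := by
    intro i
    simp only [hk1_def]
    apply keq
    have : i + 1 = (((i.val + 1 : ℕ)) : ZMod m) := by
      push_cast
      rw [ZMod.natCast_zmod_val]
    rw [this, ZMod.val_natCast, Nat.mod_mod_of_dvd]
    exact dvd_refl m
  have hk1m : ∀ i : ZMod m, k1 (i - 1) = k0 (i.val + (m - 1)) := by
    intro i
    simp only [hk1_def]
    apply keq
    have : i - 1 = (((i.val + (m - 1) : ℕ)) : ZMod m) := by
      have hcast : (((m - 1 : ℕ)) : ZMod m) = -1 := by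
        have : ((m : ℕ) : ZMod m) = 0 := ZMod.natCast_self m
        push_cast [Nat.cast_sub (by omega : 1 ≤ m)]
        rw [this]
        ring
      push_cast [hcast]
      rw [ZMod.natCast_zmod_val]
      ring
    rw [this, ZMod.val_natCast, Nat.mod_mod_of_dvd]
    exact dvd_refl m
  have hk1T : ∀ i : ZMod m, k1 (i - 1) + k1 (i + 1) - 2 * k1 i = f i := by
    intro i
    have hj := D (i.val + (m - 1))
    have e1 : i.val + (m - 1) + 2 = (i.val + 1) + m := by omega
    have e2 : i.val + (m - 1) + 1 = i.val + m := by omega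
    rw [e1, e2, kper (i.val + 1), kper i.val] at hj
    have ea : a (i.val + m) = f i := by
      simp only [ha_def]
      congr 1
      push_cast
      simp [ZMod.natCast_zmod_val]
    rw [ea] at hj
    rw [hk1m i, hk1p i]
    simp only [hk1_def]
    linarith
  -- shift to make the minimum zero
  obtain ⟨i0, -, hi0⟩ := Finset.exists_min_image (Finset.univ : Finset (ZMod m)) k1
    ⟨0, Finset.mem_univ 0⟩
  set V : ZMod m → ℕ := fun i => (k1 i - k1 i0).toNat with hV_def
  have hVcast : ∀ i, (V i : ℤ) = k1 i - k1 i0 := by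
    intro i
    simp only [hV_def]
    exact Int.toNat_of_nonneg (sub_nonneg.mpr (hi0 i (Finset.mem_univ i)))
  have hVzero : V i0 = 0 := by simp [hV_def]
  have hVT : ∀ i : ZMod m, (V (i - 1) : ℤ) + (V (i + 1) : ℤ) - 2 * (V i : ℤ) = f i := by
    intro i
    rw [hVcast, hVcast, hVcast, ← hk1T i]
    ring
  have hmain : ∀ i : ZMod m, P i =
      (if i = n then 1 else 0) + ((V (i - 1) : ℤ) + (V (i + 1) : ℤ) - 2 * (V i : ℤ)) := by
    intro i
    rw [hVT i]
    simp only [hf_def]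
    ring
  refine ⟨⟨n, V⟩, ⟨⟨i0, hVzero⟩, hmain⟩, ?_⟩
  rintro ⟨n', V'⟩ ⟨⟨iz, hiz0⟩, heq⟩
  have hiz : V' iz = 0 := hiz0
  -- first, n' = n
  have hwn : ∀ (nn : ZMod m) (VV : ZMod m → ℕ),
      (∀ i : ZMod m, P i = (if i = nn then 1 else 0) +
        ((VV (i - 1) : ℤ) + (VV (i + 1) : ℤ) - 2 * (VV i : ℤ))) →
      n = nn := by
    intro nn VV hVV
    have : ∑ i : ZMod m, (P i : ZMod m) * i
        = ∑ i : ZMod m, (((if i = nn then (1 : ℤ) else 0) : ℤ) : ZMod m) * i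
          + ∑ i : ZMod m,
            (((VV (i - 1) : ℤ) + (VV (i + 1) : ℤ) - 2 * (VV i : ℤ) : ℤ) : ZMod m) * i := by
      rw [← Finset.sum_add_distrib]
      apply Finset.sum_congr rfl
      intro i _
      rw [hVV i]
      push_cast
      ring
    rw [weighted_sum_zero m (fun i => (VV i : ℤ)), add_zero] at this
    have h2 : ∑ i : ZMod m, (((if i = nn then (1 : ℤ) else 0) : ℤ) : ZMod m) * i = nn := by
      have : ∀ i : ZMod m, (((if i = nn then (1 : ℤ) else 0) : ℤ) : ZMod m) * i
          = if i = nn then i else 0 := by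
        intro i
        split <;> simp
      rw [Finset.sum_congr rfl (fun i _ => this i), Finset.sum_ite_eq']
      simp
    rw [h2] at this
    rw [hn_def, this]
  have hn' : n' = n := (hwn n' V' heq).symm
  -- then V' = V
  have hV'T : ∀ i : ZMod m, (V' (i - 1) : ℤ) + (V' (i + 1) : ℤ) - 2 * (V' i : ℤ) = f i := by
    intro i
    have := heq i
    rw [hn'] at this
    simp only [hf_def]
    linarith
  set d : ZMod m → ℤ := fun i => (V' i : ℤ) - (V i : ℤ) with hd_def
  have hdT : ∀ i : ZMod m, d (i - 1) + d (i + 1) - 2 * d i = 0 := by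
    intro i
    simp only [hd_def]
    have h1 := hV'T i
    have h2 := hVT i
    linarith
  have hdc : ∀ i, d i = d 0 := ker_const m d hdT
  have hle : d 0 ≤ 0 := by
    rw [← hdc iz]
    simp only [hd_def]
    omega
  have hge : 0 ≤ d 0 := by
    rw [← hdc i0]
    simp only [hd_def]
    omega
  have hd0 : d 0 = 0 := le_antisymm hle hge
  have hVeq : V' = V := by
    funext i
    have := hdc i
    rw [hd0] at this
    simp only [hd_def] at this
    omega
  rw [Prod.mk.injEq]
  exact ⟨hn', hVeq⟩
end

section
/- Let X̄, Ȳ ∈ M_n(ℂ) with X̄Ȳ = ȲX̄, and consider the ℂ[x,y]-module V = ℂ^n where x acts by X̄ and y acts by Ȳ. For column vectors b, c ∈ (ℂ[x,y])^n satisfying (Ȳ − yI)b = (X̄ − xI)c in (ℂ[x,y])^n, there exists d ∈ (ℂ[x,y])^n with b = (X̄ − xI)d and c = (Ȳ − yI)d. -/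
open Matrix MvPolynomial

noncomputable section Aux13

variable {n : ℕ} (X Y : Matrix (Fin n) (Fin n) ℂ)

abbrev R13 := MvPolynomial (Fin 2) ℂ
abbrev T13 := MvPolynomial (Fin 1) ℂ

def psi13 : R13 →ₐ[ℂ] Matrix (Fin n) (Fin n) T13 :=
  ((Polynomial.aeval (X.map (algebraMap ℂ T13))).restrictScalars ℂ).comp
    (MvPolynomial.finSuccEquiv ℂ 1).toAlgHom

lemma psi13_X0 : psi13 X (MvPolynomial.X 0) = X.map (algebraMap ℂ T13) := by
  simp [psi13, MvPolynomial.finSuccEquiv_X_zero]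

lemma psi13_X1 : psi13 X (MvPolynomial.X 1) =
    algebraMap T13 (Matrix (Fin n) (Fin n) T13) (MvPolynomial.X 0) := by
  have : (MvPolynomial.X 1 : R13) = MvPolynomial.X (Fin.succ 0) := rfl
  simp [psi13, this, MvPolynomial.finSuccEquiv_X_succ, Polynomial.aeval_C]

lemma commute_psi13 (M : Matrix (Fin n) (Fin n) T13)
    (hM : Commute M (X.map (algebraMap ℂ T13)))
    (hMs : ∀ t : T13, Commute M (algebraMap T13 (Matrix (Fin n) (Fin n) T13) t))
    (r : R13) : Commute M (psi13 X r) := by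
  induction r using MvPolynomial.induction_on with
  | C a => simpa [IsScalarTower.algebraMap_apply ℂ T13 (Matrix (Fin n) (Fin n) T13)] using hMs (algebraMap ℂ T13 a)
  | add p q hp hq => simpa [map_add] using hp.add_right hq
  | mul_X p i hp =>
      rw [_root_.map_mul]
      refine hp.mul_right ?_
      fin_cases i
      · exact psi13_X0 X ▸ hM
      · exact psi13_X1 X ▸ hMs _

lemma commute_psi13_X (r : R13) :
    Commute (X.map (algebraMap ℂ T13)) (psi13 X r) := by
  refine commute_psi13 X _ (Commute.refl _) (fun t => ?_) r
  exact (Algebra.commutes t _).symm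

/-- Φ : evaluate a vector of polynomials with x ↦ X -/
def Phi13 (v : Fin n → R13) : Fin n → T13 := fun j => ∑ i, psi13 X (v i) j i

lemma Phi13_add (v w : Fin n → R13) :
    Phi13 X (v + w) = Phi13 X v + Phi13 X w := by
  funext j
  simp [Phi13, Finset.sum_add_distrib]

/-- Φ kills the range of (X - x) -/
lemma Phi13_A (w : Fin n → R13) :
    Phi13 X ((X.map (fun a => MvPolynomial.C a) -
      (MvPolynomial.X 0 : R13) • 1).mulVec w) = 0 := by
  funext j
  have key : ∀ k, psi13 X (w k) * (X.map (algebraMap ℂ T13))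
      = (X.map (algebraMap ℂ T13)) * psi13 X (w k) :=
    fun k => (commute_psi13_X X (w k)).symm
  simp only [Phi13, mulVec, dotProduct, Pi.zero_apply]
  -- expand ψ of entries
  simp only [Matrix.sub_apply, map_apply, Matrix.smul_apply, one_apply, smul_eq_mul, mul_ite, mul_one, mul_zero,
    sub_mul, map_sum, _root_.map_mul, map_sub, ite_mul, zero_mul]
  simp only [Matrix.sum_apply]
  rw [Finset.sum_comm]
  refine Finset.sum_eq_zero (fun k _ => ?_)
  have hC : ∀ x : Fin n, psi13 X (MvPolynomial.C (X x k))
      = algebraMap ℂ (Matrix (Fin n) (Fin n) T13) (X x k) := fun x => (psi13 X).commutes _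
  have h1 : ∀ x : Fin n, (psi13 X (MvPolynomial.C (X x k)) * psi13 X (w k)) j x
      = psi13 X (w k) j x * (X.map (algebraMap ℂ T13)) x k := by
    intro x
    rw [hC, ← Algebra.smul_def, Matrix.smul_apply, Algebra.smul_def, map_apply, mul_comm]
  have h2 : ∀ x : Fin n, psi13 X (if x = k then MvPolynomial.X 0 * w k else 0)
      = if x = k then (X.map (algebraMap ℂ T13)) * psi13 X (w k) else 0 := by
    intro x
    rw [apply_ite (psi13 X), _root_.map_mul, psi13_X0, map_zero]
  simp only [Matrix.sub_apply, h1, h2]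
  rw [Finset.sum_sub_distrib]
  have h3 : ∑ x : Fin n, psi13 X (w k) j x * (X.map (algebraMap ℂ T13)) x k
      = (psi13 X (w k) * X.map (algebraMap ℂ T13)) j k := (Matrix.mul_apply).symm
  have h4 : ∑ x : Fin n, (if x = k then (X.map (algebraMap ℂ T13)) * psi13 X (w k) else 0) j x
      = ((X.map (algebraMap ℂ T13)) * psi13 X (w k)) j k := by
    rw [Finset.sum_eq_single k] <;> simp +contextual
  rw [h3, h4, key, sub_self]


lemma Phi13_B (hcomm : X * Y = Y * X) (w : Fin n → R13) :
    Phi13 X ((Y.map (fun a => MvPolynomial.C a) -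
        (MvPolynomial.X 1 : R13) • 1).mulVec w)
      = (Y.map (algebraMap ℂ T13) -
          (MvPolynomial.X 0 : T13) • 1).mulVec (Phi13 X w) := by
  funext j
  set B' := Y.map (algebraMap ℂ T13) -
      (MvPolynomial.X 0 : T13) • (1 : Matrix (Fin n) (Fin n) T13) with hB'
  have hYX : Commute (Y.map (algebraMap ℂ T13)) (X.map (algebraMap ℂ T13)) := by
    have := congrArg (fun M : Matrix (Fin n) (Fin n) ℂ => M.map (algebraMap ℂ T13)) hcomm
    unfold Commute SemiconjBy
    simpa [Matrix.map_mul] using this.symm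
  have hBX : Commute B' (X.map (algebraMap ℂ T13)) := by
    refine Commute.sub_left hYX ?_
    exact Commute.smul_left (Commute.one_left _) _
  have hB : ∀ r, Commute B' (psi13 X r) :=
    commute_psi13 X B' hBX (fun t => (Algebra.commutes t B').symm)
  have hkey : ∀ k, psi13 X (w k) * B' = B' * psi13 X (w k) := fun k => (hB (w k)).symm
  simp only [Phi13, mulVec, dotProduct, Pi.zero_apply]
  simp only [Matrix.sub_apply, map_apply, Matrix.smul_apply, one_apply, smul_eq_mul, mul_ite, mul_one,
    mul_zero, sub_mul, map_sum, _root_.map_mul, map_sub, ite_mul, zero_mul, Matrix.sum_apply]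
  rw [Finset.sum_comm]
  have step : ∀ k : Fin n,
      ∑ x : Fin n,
        (((psi13 X) (MvPolynomial.C (Y x k)) * (psi13 X) (w k)) j x -
          (psi13 X) (if x = k then MvPolynomial.X 1 * w k else 0) j x)
      = (B' * psi13 X (w k)) j k := by
    intro k
    have h1 : ∀ x : Fin n, (psi13 X (MvPolynomial.C (Y x k)) * psi13 X (w k)) j x
        = psi13 X (w k) j x * (Y.map (algebraMap ℂ T13)) x k := by
      intro x
      have hC : psi13 X (MvPolynomial.C (Y x k))
          = algebraMap ℂ (Matrix (Fin n) (Fin n) T13) (Y x k) := (psi13 X).commutes _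
      rw [hC, ← Algebra.smul_def, Matrix.smul_apply, Algebra.smul_def, map_apply, mul_comm]
    have h2 : ∀ x : Fin n, psi13 X (if x = k then MvPolynomial.X 1 * w k else 0)
        = if x = k then (MvPolynomial.X 0 : T13) • psi13 X (w k) else 0 := by
      intro x
      rw [apply_ite (psi13 X), _root_.map_mul, psi13_X1, ← Algebra.smul_def, map_zero]
    have h2' : ∀ x : Fin n, psi13 X (if x = k then MvPolynomial.X 1 * w k else 0) j x
        = psi13 X (w k) j x * (if x = k then (MvPolynomial.X 0 : T13) else 0) := by
      intro x
      rw [h2]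
      by_cases hx : x = k <;> simp [hx, smul_eq_C_mul, mul_comm]
    simp only [h1, h2']
    rw [← hkey k, Matrix.mul_apply]
    refine Finset.sum_congr rfl (fun x _ => ?_)
    rw [hB', Matrix.sub_apply, Matrix.smul_apply, one_apply]
    simp [smul_eq_mul, mul_ite, mul_sub, mul_one, mul_zero]
  rw [Finset.sum_congr rfl (fun k _ => step k)]
  simp only [Matrix.mul_apply]
  rw [Finset.sum_comm]
  simp [Phi13, Finset.mul_sum]


def g13 : T13 →ₐ[ℂ] R13 := MvPolynomial.rename Fin.succ

lemma psi13_g13 (t : T13) :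
    psi13 X (g13 t) = algebraMap T13 (Matrix (Fin n) (Fin n) T13) t := by
  have : (psi13 X).comp g13
      = (Algebra.ofId T13 (Matrix (Fin n) (Fin n) T13)).restrictScalars ℂ := by
    apply MvPolynomial.algHom_ext
    intro i
    obtain rfl : i = 0 := Subsingleton.elim i 0
    have h1 : g13 (MvPolynomial.X 0) = MvPolynomial.X 1 := by
      simp only [g13, MvPolynomial.rename_X]
      rfl
    simp only [AlgHom.comp_apply]
    rw [h1, psi13_X1]
    rfl
  exact DFunLike.congr_fun this t

lemma g13_C (a : ℂ) : g13 (algebraMap ℂ T13 a) = MvPolynomial.C a := by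
  rw [g13.commutes, MvPolynomial.algebraMap_eq]

lemma Phi13_iota (u : Fin n → T13) : Phi13 X (fun i => g13 (u i)) = u := by
  funext j
  simp only [Phi13, psi13_g13, Matrix.algebraMap_matrix_apply]
  rw [Finset.sum_eq_single j (fun b _ hb => if_neg (Ne.symm hb))
    (fun hj => absurd (Finset.mem_univ j) hj), if_pos rfl]
  simp

lemma Phi13_mulX0 (v : Fin n → R13) :
    Phi13 X (fun i => (MvPolynomial.X 0 : R13) * v i)
      = (X.map (algebraMap ℂ T13)).mulVec (Phi13 X v) := by
  funext j
  simp only [Phi13, _root_.map_mul, psi13_X0, mulVec, dotProduct, Matrix.mul_apply,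
    Finset.mul_sum]
  rw [Finset.sum_comm]

lemma Phi13_mulX1 (v : Fin n → R13) :
    Phi13 X (fun i => (MvPolynomial.X 1 : R13) * v i)
      = fun j => (MvPolynomial.X 0 : T13) * Phi13 X v j := by
  funext j
  simp only [Phi13, _root_.map_mul, psi13_X1, Finset.mul_sum]
  refine Finset.sum_congr rfl fun i _ => ?_
  rw [← Algebra.smul_def, Matrix.smul_apply, smul_eq_mul]

/-- x-step: x • ι u = ι (X' *ᵥ u) - A *ᵥ ι u -/
lemma iota_step (u : Fin n → T13) :
    (fun i => (MvPolynomial.X 0 : R13) * g13 (u i))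
      = (fun i => g13 (((X.map (algebraMap ℂ T13)).mulVec u) i))
        - (X.map (fun a => MvPolynomial.C a) -
            (MvPolynomial.X 0 : R13) • 1).mulVec (fun i => g13 (u i)) := by
  funext i
  simp only [Pi.sub_apply, mulVec, dotProduct, Matrix.sub_apply, map_apply, Matrix.smul_apply, one_apply,
    smul_eq_mul, mul_ite, mul_one, mul_zero, sub_mul, ite_mul, zero_mul, map_sum,
    _root_.map_mul, Finset.sum_sub_distrib]
  have h2 : ∑ k, (if i = k then MvPolynomial.X 0 * g13 (u k) else 0)
      = MvPolynomial.X 0 * g13 (u i) := by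
    rw [Finset.sum_eq_single i (fun b _ hb => if_neg (Ne.symm hb))
      (fun hj => absurd (Finset.mem_univ i) hj), if_pos rfl]
  simp only [g13_C, h2]
  ring


lemma exists_rep (v : Fin n → R13) :
    ∃ d : Fin n → R13,
      v = (X.map (fun a => MvPolynomial.C a) -
            (MvPolynomial.X 0 : R13) • 1).mulVec d
          + fun i => g13 (Phi13 X v i) := by
  classical
  set A := X.map (fun a => MvPolynomial.C a) -
      (MvPolynomial.X 0 : R13) • (1 : Matrix (Fin n) (Fin n) R13) with hA
  -- the set of good vectors
  set P : (Fin n → R13) → Prop :=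
    fun v => ∃ d, v = A.mulVec d + fun i => g13 (Phi13 X v i) with hP
  have Piota : ∀ u : Fin n → T13, P (fun i => g13 (u i)) := by
    intro u
    refine ⟨0, ?_⟩
    rw [Phi13_iota, Matrix.mulVec_zero, zero_add]
  have Padd : ∀ v w, P v → P w → P (v + w) := by
    rintro v w ⟨d1, h1⟩ ⟨d2, h2⟩
    refine ⟨d1 + d2, ?_⟩
    rw [Phi13_add, Matrix.mulVec_add]
    funext i
    have e1 := congrFun h1 i
    have e2 := congrFun h2 i
    simp only [Pi.add_apply] at e1 e2 ⊢
    rw [e1, e2, map_add]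
    ring
  have Px : ∀ v, P v → P (fun i => (MvPolynomial.X 0 : R13) * v i) := by
    rintro v ⟨d, hd⟩
    refine ⟨(fun i => (MvPolynomial.X 0 : R13) * d i) - fun i => g13 (Phi13 X v i), ?_⟩
    have step := iota_step X (Phi13 X v)
    rw [Phi13_mulX0]
    funext i
    have ed := congrFun hd i
    have es := congrFun step i
    simp only [Pi.add_apply, Pi.sub_apply] at ed es ⊢
    rw [Matrix.mulVec_sub]
    have hmv : A.mulVec (fun i => (MvPolynomial.X 0 : R13) * d i) i
        = (MvPolynomial.X 0 : R13) * A.mulVec d i := by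
      have := congrFun (Matrix.mulVec_smul A (MvPolynomial.X 0 : R13) d) i
      simpa [Pi.smul_def, smul_eq_mul] using this
    simp only [Pi.sub_apply, hmv]
    rw [ed]
    rw [mul_add, es]
    ring
  have Py : ∀ v, P v → P (fun i => (MvPolynomial.X 1 : R13) * v i) := by
    rintro v ⟨d, hd⟩
    refine ⟨fun i => (MvPolynomial.X 1 : R13) * d i, ?_⟩
    rw [Phi13_mulX1]
    funext i
    have ed := congrFun hd i
    have hmv : A.mulVec (fun i => (MvPolynomial.X 1 : R13) * d i) i
        = (MvPolynomial.X 1 : R13) * A.mulVec d i := by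
      have := congrFun (Matrix.mulVec_smul A (MvPolynomial.X 1 : R13) d) i
      simpa [Pi.smul_def, smul_eq_mul] using this
    simp only [Pi.add_apply] at ed ⊢
    rw [hmv, ed, mul_add]
    congr 1
    -- g13 (X0 * Phi13 X v i) = X1 * g13 (Phi13 X v i)
    rw [_root_.map_mul]
    congr 1
    simp only [g13, MvPolynomial.rename_X]
    rfl
  -- single vectors
  have Hsingle : ∀ (r : R13) (i0 : Fin n), P (Pi.single i0 r) := by
    intro r
    induction r using MvPolynomial.induction_on with
    | C a =>
        intro i0
        have : (Pi.single i0 (MvPolynomial.C a) : Fin n → R13)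
            = fun i => g13 ((Pi.single i0 (algebraMap ℂ T13 a) : Fin n → T13) i) := by
          funext i
          by_cases hi : i = i0
          · subst hi; simp [Pi.single_eq_same, g13_C]
          · simp [Pi.single_eq_of_ne hi]
        rw [this]
        exact Piota _
    | add p q hp hq =>
        intro i0
        have : (Pi.single i0 (p + q) : Fin n → R13)
            = Pi.single i0 p + Pi.single i0 q := by
          funext i
          simp [Pi.single_apply, ite_add_ite]
        rw [this]
        exact Padd _ _ (hp i0) (hq i0)
    | mul_X p i hp =>
        intro i0
        fin_cases i
        · show P (Pi.single i0 (p * MvPolynomial.X 0))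
          have : (Pi.single i0 (p * MvPolynomial.X 0) : Fin n → R13)
              = fun k => (MvPolynomial.X 0 : R13) * (Pi.single i0 p : Fin n → R13) k := by
            funext k
            simp [Pi.single_apply, mul_comm, mul_ite]
          rw [this]
          exact Px _ (hp i0)
        · show P (Pi.single i0 (p * MvPolynomial.X 1))
          have : (Pi.single i0 (p * MvPolynomial.X 1) : Fin n → R13)
              = fun k => (MvPolynomial.X 1 : R13) * (Pi.single i0 p : Fin n → R13) k := by
            funext k
            simp [Pi.single_apply, mul_comm, mul_ite]
          rw [this]
          exact Py _ (hp i0)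
  -- conclude for arbitrary v
  have : P v := by
    have hv : v = ∑ i : Fin n, Pi.single i (v i) := by
      funext k
      rw [Finset.sum_apply]
      simp [Pi.single_apply]
    rw [hv]
    refine Finset.sum_induction _ P Padd ?_ (fun i _ => Hsingle (v i) i)
    -- P 0
    have h0 : (0 : Fin n → R13) = fun i => g13 ((0 : Fin n → T13) i) := by
      funext i; simp
    rw [h0]
    exact Piota 0
  exact this


lemma mulVec_inj13 {S : Type*} [CommRing S] [IsDomain S] {M : Matrix (Fin n) (Fin n) S}
    (hdet : M.det ≠ 0) {v w : Fin n → S} (h : M.mulVec v = M.mulVec w) : v = w := by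
  have h2 := congrArg (fun u => (M.adjugate).mulVec u) h
  simp only [Matrix.mulVec_mulVec, Matrix.adjugate_mul] at h2
  funext i
  have h3 := congrFun h2 i
  simp only [Matrix.smul_mulVec, Matrix.one_mulVec, Pi.smul_apply, smul_eq_mul] at h3
  exact mul_left_cancel₀ hdet h3

lemma det_ne13 {S : Type*} [CommRing S] [Algebra ℂ S] (Z : Matrix (Fin n) (Fin n) ℂ)
    (t : S) (φ : S →ₐ[ℂ] Polynomial ℂ) (hφ : φ t = Polynomial.X) :
    (Z.map (algebraMap ℂ S) - t • 1).det ≠ 0 := by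
  intro h0
  have h1 : ((Z.map (algebraMap ℂ S) - t • 1).map φ).det = 0 := by
    have hh := RingHom.map_det (φ : S →+* Polynomial ℂ) (Z.map (algebraMap ℂ S) - t • 1)
    rw [h0, map_zero, RingHom.mapMatrix_apply] at hh
    exact hh.symm
  have h2 : (Z.map (algebraMap ℂ S) - t • 1).map φ = -(Matrix.charmatrix Z) := by
    ext i k
    simp only [Matrix.map_apply, Matrix.sub_apply, Matrix.smul_apply, Matrix.one_apply,
      smul_eq_mul, map_sub, _root_.map_mul, hφ, Matrix.charmatrix_apply, Matrix.neg_apply,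
      Matrix.diagonal_apply, AlgHom.commutes]
    by_cases hik : i = k <;>
      simp [hik, Polynomial.algebraMap_eq, mul_ite, mul_one, mul_zero]
  rw [h2, Matrix.det_neg] at h1
  have h3 : Z.charpoly = 0 := by
    have := h1
    rw [show (Matrix.charmatrix Z).det = Z.charpoly from rfl] at this
    rcases mul_eq_zero.mp this with hc | hc
    · exact absurd hc (pow_ne_zero _ (by norm_num : (-1 : Polynomial ℂ) ≠ 0))
    · exact hc
  exact (Matrix.charpoly_monic Z).ne_zero h3

end Aux13

/-- Key exactness step of Lemma 3: for commuting `X, Y ∈ Mₙ(ℂ)` and polynomial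
column vectors `b, c` with `(Y - yI)b = (X - xI)c` over ℂ[x,y], there is a
polynomial vector `d` with `b = (X - xI)d` and `c = (Y - yI)d`. -/
theorem stmt_13 (n : ℕ) (X Y : Matrix (Fin n) (Fin n) ℂ) (hcomm : X * Y = Y * X)
    (b c : Fin n → MvPolynomial (Fin 2) ℂ)
    (h : (Y.map (fun a => MvPolynomial.C a) -
            (MvPolynomial.X 1 : MvPolynomial (Fin 2) ℂ) • 1).mulVec b
       = (X.map (fun a => MvPolynomial.C a) -
            (MvPolynomial.X 0 : MvPolynomial (Fin 2) ℂ) • 1).mulVec c) :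
    ∃ d : Fin n → MvPolynomial (Fin 2) ℂ,
      b = (X.map (fun a => MvPolynomial.C a) -
            (MvPolynomial.X 0 : MvPolynomial (Fin 2) ℂ) • 1).mulVec d ∧
      c = (Y.map (fun a => MvPolynomial.C a) -
            (MvPolynomial.X 1 : MvPolynomial (Fin 2) ℂ) • 1).mulVec d := by
  classical
  have hmapX : X.map (fun a => (MvPolynomial.C a : R13)) = X.map (algebraMap ℂ R13) := by
    ext i j
    simp [MvPolynomial.algebraMap_eq]
  have hdetA : (X.map (fun a => MvPolynomial.C a) -
      (MvPolynomial.X 0 : R13) • (1 : Matrix (Fin n) (Fin n) R13)).det ≠ 0 := by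
    rw [hmapX]
    exact det_ne13 X (MvPolynomial.X 0)
      (MvPolynomial.aeval (fun i : Fin 2 => if i = 0 then Polynomial.X else 0)) (by simp)
  have hdetB' : (Y.map (algebraMap ℂ T13) -
      (MvPolynomial.X 0 : T13) • (1 : Matrix (Fin n) (Fin n) T13)).det ≠ 0 :=
    det_ne13 Y (MvPolynomial.X 0) (MvPolynomial.aeval (fun _ : Fin 1 => Polynomial.X)) (by simp)
  have hPhib : Phi13 X b = 0 := by
    have h1 : (Y.map (algebraMap ℂ T13) -
          (MvPolynomial.X 0 : T13) • (1 : Matrix (Fin n) (Fin n) T13)).mulVec (Phi13 X b)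
        = (Y.map (algebraMap ℂ T13) -
          (MvPolynomial.X 0 : T13) • (1 : Matrix (Fin n) (Fin n) T13)).mulVec 0 := by
      rw [Matrix.mulVec_zero, ← Phi13_B X Y hcomm b, h, Phi13_A]
    exact mulVec_inj13 hdetB' h1
  obtain ⟨d, hd⟩ := exists_rep X b
  have hb : b = (X.map (fun a => MvPolynomial.C a) -
      (MvPolynomial.X 0 : R13) • 1).mulVec d := by
    rw [hd, hPhib]
    funext i
    simp
  refine ⟨d, hb, ?_⟩
  have hXY : (X.map (fun a => (MvPolynomial.C a : R13))) * (Y.map fun a => MvPolynomial.C a)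
      = (Y.map fun a => MvPolynomial.C a) * (X.map fun a => MvPolynomial.C a) := by
    have h' := congrArg
      (fun M : Matrix (Fin n) (Fin n) ℂ => M.map (fun a => (MvPolynomial.C a : R13))) hcomm
    simpa [Matrix.map_mul] using h'
  have hAB : Commute
      (X.map (fun a => (MvPolynomial.C a : R13)) - (MvPolynomial.X 0 : R13) • 1)
      (Y.map (fun a => (MvPolynomial.C a : R13)) - (MvPolynomial.X 1 : R13) • 1) := by
    refine Commute.sub_left (Commute.sub_right hXY ?_) (Commute.sub_right ?_ ?_)
    · exact Commute.smul_right (Commute.one_right _) _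
    · exact Commute.smul_left (Commute.one_left _) _
    · exact Commute.smul_left (Commute.smul_right (Commute.one_right _) _) _
  have hc : (X.map (fun a => (MvPolynomial.C a : R13)) -
        (MvPolynomial.X 0 : R13) • 1).mulVec c
      = (X.map (fun a => (MvPolynomial.C a : R13)) -
        (MvPolynomial.X 0 : R13) • 1).mulVec
          ((Y.map (fun a => (MvPolynomial.C a : R13)) -
            (MvPolynomial.X 1 : R13) • 1).mulVec d) := by
    rw [← h, hb, Matrix.mulVec_mulVec, Matrix.mulVec_mulVec, hAB.eq]
  exact mulVec_inj13 hdetA hc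
end
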